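/- Define P_{2N}(X,Y) = 2^{2N}((X+1-N)/2)_N ((Y+1-N)/2)_N. Then for every N ≥ 1, writing X = C+B and Y = C-B, the two product representations P_{4N} = ∏_{j=1}^{N} ((B²-C²)² - 2(2j-1)²(B²+C²) + (2j-1)⁴) and P_{4N+2} = (-B²+C²) ∏_{j=1}^{N} ((B²-C²)² - 2(2j)²(B²+C²) + (2j)⁴) hold as identities of polynomials in B and C. -/
import Mathlib

open Finset

noncomputable def poch (x : ℝ) (m : ℕ) : ℝ := (ascPochhammer ℝ m).eval x

noncomputable def PP (N : ℕ) (X Y : ℝ) : ℝ :=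
  2 ^ (2 * N) * poch ((X + 1 - N) / 2) N * poch ((Y + 1 - N) / 2) N

lemma poch_succ_left (x : ℝ) (m : ℕ) : poch x (m + 1) = x * poch (x + 1) m := by
  simp [poch, ascPochhammer_succ_left, Polynomial.eval_comp]

lemma poch_succ_right (x : ℝ) (m : ℕ) : poch x (m + 1) = poch x m * (x + m) := by
  simp [poch, ascPochhammer_succ_eval]

lemma PP_step (M : ℕ) (X Y : ℝ) :
    PP (M + 2) X Y = PP M X Y * ((X ^ 2 - ((M : ℝ) + 1) ^ 2) * (Y ^ 2 - ((M : ℝ) + 1) ^ 2)) := by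
  have h : ∀ Z : ℝ, poch ((Z + 1 - (↑(M + 2) : ℝ)) / 2) (M + 2) =
      ((Z - 1 - M) / 2) * (poch ((Z + 1 - M) / 2) M * ((Z + 1 + M) / 2)) := by
    intro Z
    rw [show M + 2 = (M + 1) + 1 from rfl, poch_succ_left, poch_succ_right]
    push_cast
    ring_nf
  simp only [PP, h]
  ring

/-- Branson's product formulas: with `X = C+B`, `Y = C-B`, the unified Pochhammer
formula for `P_{2N}` agrees with the product representations of `P_{4N}` and
`P_{4N+2}`. -/
theorem stmt_16 (N : ℕ) (hN : 1 ≤ N) (B C : ℝ) :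
    PP (2 * N) (C + B) (C - B) =
      ∏ j ∈ Finset.Icc 1 N,
        ((B ^ 2 - C ^ 2) ^ 2 - 2 * (2 * (j : ℝ) - 1) ^ 2 * (B ^ 2 + C ^ 2) +
          (2 * (j : ℝ) - 1) ^ 4) ∧
    PP (2 * N + 1) (C + B) (C - B) =
      (-B ^ 2 + C ^ 2) *
        ∏ j ∈ Finset.Icc 1 N,
          ((B ^ 2 - C ^ 2) ^ 2 - 2 * (2 * (j : ℝ)) ^ 2 * (B ^ 2 + C ^ 2) +
            (2 * (j : ℝ)) ^ 4) := by
  induction N, hN using Nat.le_induction with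
  | base =>
    constructor
    · have h2 : PP 2 (C + B) (C - B) =
          PP 0 (C + B) (C - B) * (((C+B)^2 - ((0:ℝ)+1)^2) * ((C-B)^2 - ((0:ℝ)+1)^2)) := by
        simpa using PP_step 0 (C + B) (C - B)
      simp only [show 2 * 1 = 2 from rfl, h2]
      simp [PP, poch]
      ring
    · have h2 : PP 3 (C + B) (C - B) =
          PP 1 (C + B) (C - B) * (((C+B)^2 - ((1:ℝ)+1)^2) * ((C-B)^2 - ((1:ℝ)+1)^2)) := by
        simpa using PP_step 1 (C + B) (C - B)
      simp only [show 2 * 1 + 1 = 3 from rfl, h2]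
      simp [PP, poch, ascPochhammer_succ_eval]
      ring
  | succ n hn ih =>
    obtain ⟨ih1, ih2⟩ := ih
    have hn' : 1 ≤ n + 1 := by omega
    rw [Finset.prod_Icc_succ_top hn', Finset.prod_Icc_succ_top hn']
    constructor
    · have := PP_step (2 * n) (C + B) (C - B)
      rw [show 2 * (n + 1) = 2 * n + 2 by ring, this, ih1]
      push_cast
      ring
    · have := PP_step (2 * n + 1) (C + B) (C - B)
      rw [show 2 * (n + 1) + 1 = 2 * n + 1 + 2 by ring, this, ih2]
      push_cast
      ring
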